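/- Let θ ∈ [0,1], let x ∈ R^n with residual r = b − Ax satisfying Aᵀr ≠ 0, and let ε = (θ/‖Aᵀr‖₂²)·max_{1≤j≤n} |A_(j)ᵀ r|²/‖A_(j)‖₂² + (1−θ)/‖A‖_F². Suppose J' is a proper subset of {1,…,n} with A_{J'}ᵀ r = 0 and ‖A‖_F² − ‖A_{J'}‖_F² > 0. Then ‖Aᵀr‖₂² · ε ≥ (θ·‖A‖_F²/(‖A‖_F² − ‖A_{J'}‖_F²) + (1−θ)) · (σ_min(A)²/‖A‖_F²) · ‖x − x⋆‖²_{AᵀA}. -/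

import Mathlib

/-!
The residual is orthogonal to the columns in `J'`, so `‖Aᵀr‖₂²` is a sum over the columns
`j ∉ J'` of `|A_(j)ᵀ r|² ≤ maxRatio · ‖A_(j)‖₂²`; hence `‖Aᵀr‖₂² ≤ maxRatio · (‖A‖_F² − ‖A_{J'}‖_F²)`.
By the normal equation `Aᵀr = AᵀA (x⋆ − x)`, and diagonalising `AᵀA` gives
`‖AᵀA d‖₂² ≥ σ_min(A)² ‖A d‖₂²`. Both bounds are then inserted into
`‖Aᵀr‖₂² ε = θ · maxRatio + (1 − θ) ‖Aᵀr‖₂² / ‖A‖_F²`.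
-/

noncomputable section
open Matrix

/-- Squared Euclidean norm `‖v‖₂²` of a vector. -/
def norm2 {ι : Type*} [Fintype ι] (v : ι → ℝ) : ℝ := ∑ i, (v i) ^ 2

/-- Squared Frobenius norm `‖A‖_F²` of a matrix. -/
def frob2 {ι κ : Type*} [Fintype ι] [Fintype κ] (A : Matrix ι κ ℝ) : ℝ :=
  ∑ i, ∑ j, (A i j) ^ 2

/-- Squared largest singular value `σ_max(B)²`, i.e. the largest eigenvalue of `Bᵀ * B`. -/
def sigmaMaxSq {ι κ : Type*} [Fintype ι] [Fintype κ] [DecidableEq κ]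
    (B : Matrix ι κ ℝ) : ℝ :=
  sSup (Set.range (by simpa using Matrix.isHermitian_conjTranspose_mul_self B : (Bᵀ * B).IsHermitian).eigenvalues)

/-- Squared smallest singular value `σ_min(B)²`, i.e. the smallest eigenvalue of `Bᵀ * B`. -/
def sigmaMinSq {ι κ : Type*} [Fintype ι] [Fintype κ] [DecidableEq κ]
    (B : Matrix ι κ ℝ) : ℝ :=
  sInf (Set.range (by simpa using Matrix.isHermitian_conjTranspose_mul_self B : (Bᵀ * B).IsHermitian).eigenvalues)

/-- Squared Euclidean norm `‖A_(j)‖₂²` of the `j`-th column of `A`. -/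
def col2 {m n : ℕ} (A : Matrix (Fin m) (Fin n) ℝ) (j : Fin n) : ℝ := ∑ i, (A i j) ^ 2

/-- `A` has full column rank: its columns are linearly independent. -/
def FullColRank {m n : ℕ} (A : Matrix (Fin m) (Fin n) ℝ) : Prop :=
  LinearIndependent ℝ fun j : Fin n => (fun i => A i j : Fin m → ℝ)

/-- `max_{1 ≤ j ≤ n} |A_(j)ᵀ r|² / ‖A_(j)‖₂²`. -/
def maxRatio {m n : ℕ} (A : Matrix (Fin m) (Fin n) ℝ) (r : Fin m → ℝ) : ℝ :=
  ⨆ j : Fin n, ((Aᵀ *ᵥ r) j) ^ 2 / col2 A j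

/-- The greedy parameter
`ε = (θ/‖Aᵀr‖₂²)·max_j |A_(j)ᵀ r|²/‖A_(j)‖₂² + (1−θ)/‖A‖_F²`. -/
def eps {m n : ℕ} (A : Matrix (Fin m) (Fin n) ℝ) (r : Fin m → ℝ) (θ : ℝ) : ℝ :=
  θ / norm2 (Aᵀ *ᵥ r) * maxRatio A r + (1 - θ) / frob2 A

open Classical in
/-- The greedy index set `J = { j : |A_(j)ᵀ r|² ≥ ε ‖Aᵀr‖₂² ‖A_(j)‖₂² }`. -/
def greedySet {m n : ℕ} (A : Matrix (Fin m) (Fin n) ℝ) (r : Fin m → ℝ) (θ : ℝ) :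
    Finset (Fin n) :=
  Finset.univ.filter fun j =>
    eps A r θ * norm2 (Aᵀ *ᵥ r) * col2 A j ≤ ((Aᵀ *ᵥ r) j) ^ 2

/-- The column submatrix `A_J` of `A`, with columns indexed by `J`. -/
def subCols {m n : ℕ} (A : Matrix (Fin m) (Fin n) ℝ) (J : Finset (Fin n)) :
    Matrix (Fin m) {j // j ∈ J} ℝ :=
  A.submatrix id fun j => (j : Fin n)

/-- The submatrix `I_J` of the `n × n` identity with columns indexed by `J`. -/
def subId {n : ℕ} (J : Finset (Fin n)) : Matrix (Fin n) {j // j ∈ J} ℝ :=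
  (1 : Matrix (Fin n) (Fin n) ℝ).submatrix id fun j => (j : Fin n)

/-- Moore–Penrose pseudoinverse of a full-column-rank matrix: `B† = (BᵀB)⁻¹Bᵀ`. -/
def pinv {ι κ : Type*} [Fintype ι] [Fintype κ] [DecidableEq κ] (B : Matrix ι κ ℝ) :
    Matrix κ ι ℝ :=
  (Bᵀ * B)⁻¹ * Bᵀ

/-- The matrix `Ã_J` whose columns are the normalized columns `A_(j)/‖A_(j)‖₂`, `j ∈ J`. -/
def tildeA {m n : ℕ} (A : Matrix (Fin m) (Fin n) ℝ) (J : Finset (Fin n)) :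
    Matrix (Fin m) {j // j ∈ J} ℝ :=
  Matrix.of fun i j => A i (j : Fin n) / Real.sqrt (col2 A (j : Fin n))

/-- The matrix `Ĩ_J` whose columns are `e_j/‖A_(j)‖₂`, `j ∈ J`. -/
def tildeI {m n : ℕ} (A : Matrix (Fin m) (Fin n) ℝ) (J : Finset (Fin n)) :
    Matrix (Fin n) {j // j ∈ J} ℝ :=
  Matrix.of fun i j => (if i = (j : Fin n) then 1 else 0) / Real.sqrt (col2 A (j : Fin n))

lemma norm2_eq_dotProduct {ι : Type*} [Fintype ι] (v : ι → ℝ) : norm2 v = v ⬝ᵥ v := by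
  simp only [norm2, dotProduct, sq]

lemma norm2_nonneg {ι : Type*} [Fintype ι] (v : ι → ℝ) : 0 ≤ norm2 v :=
  Finset.sum_nonneg fun i _ => sq_nonneg (v i)

lemma norm2_pos {ι : Type*} [Fintype ι] {v : ι → ℝ} (hv : v ≠ 0) : 0 < norm2 v :=
  (norm2_nonneg v).lt_of_ne' (by rwa [norm2_eq_dotProduct, Ne, dotProduct_self_eq_zero])

lemma norm2_neg {ι : Type*} [Fintype ι] (v : ι → ℝ) : norm2 (-v) = norm2 v := by
  simp only [norm2, Pi.neg_apply, neg_sq]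

lemma dotProduct_mulVec_eq_star_mulVec_dotProduct {n : Type*} [Fintype n] (U : Matrix n n ℝ)
    (v w : n → ℝ) : v ⬝ᵥ (U *ᵥ w) = (star U *ᵥ v) ⬝ᵥ w := by
  rw [dotProduct_mulVec, star_eq_conjTranspose, conjTranspose_eq_transpose_of_trivial,
    mulVec_transpose]

lemma dotProduct_unitary_mulVec {n : Type*} [Fintype n] [DecidableEq n] {U : Matrix n n ℝ}
    (hU : star U * U = 1) (v w : n → ℝ) : (U *ᵥ v) ⬝ᵥ (U *ᵥ w) = v ⬝ᵥ w := by
  rw [dotProduct_mulVec_eq_star_mulVec_dotProduct, mulVec_mulVec, hU, one_mulVec]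

theorem Matrix.IsHermitian.mul_dotProduct_mulVec_le {n : Type*} [Fintype n] [DecidableEq n]
    {M : Matrix n n ℝ} (hM : M.IsHermitian) {s : ℝ} (hs : 0 ≤ s)
    (hsle : ∀ i, s ≤ hM.eigenvalues i) (d : n → ℝ) :
    s * (d ⬝ᵥ M *ᵥ d) ≤ (M *ᵥ d) ⬝ᵥ (M *ᵥ d) := by
  set μ := hM.eigenvalues
  set U : Matrix n n ℝ := (hM.eigenvectorUnitary : Matrix n n ℝ)
  have hU : star U * U = 1 := Unitary.coe_star_mul_self hM.eigenvectorUnitary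
  set c := star U *ᵥ d
  have hMd : M *ᵥ d = U *ᵥ (diagonal μ *ᵥ c) := by
    conv_lhs => rw [hM.spectral_theorem]
    simp only [Unitary.conjStarAlgAut_apply, RCLike.ofReal_real_eq_id, Function.id_comp,
      mulVec_mulVec, Matrix.mul_assoc, U, c, μ]
  have hquad : d ⬝ᵥ M *ᵥ d = ∑ i, μ i * c i ^ 2 := by
    rw [hMd, dotProduct_mulVec_eq_star_mulVec_dotProduct]
    simp only [dotProduct, mulVec_diagonal, sq, c]
    exact Finset.sum_congr rfl fun i _ => by ring
  have hsq : (M *ᵥ d) ⬝ᵥ (M *ᵥ d) = ∑ i, (μ i * c i) ^ 2 := by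
    rw [hMd, dotProduct_unitary_mulVec hU]
    simp only [dotProduct, mulVec_diagonal, sq]
  rw [hquad, hsq, Finset.mul_sum]
  refine Finset.sum_le_sum fun i _ => ?_
  have : 0 ≤ (μ i - s) * μ i * c i ^ 2 :=
    mul_nonneg (mul_nonneg (sub_nonneg.2 (hsle i)) (hs.trans (hsle i))) (sq_nonneg _)
  nlinarith

section SingularValues

variable {ι κ : Type*} [Fintype ι]

lemma isHermitian_transpose_mul_self (B : Matrix ι κ ℝ) : (Bᵀ * B).IsHermitian := by
  simpa using isHermitian_conjTranspose_mul_self B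

variable [Fintype κ]

lemma norm2_mulVec_eq_dotProduct (B : Matrix ι κ ℝ) (d : κ → ℝ) :
    norm2 (B *ᵥ d) = d ⬝ᵥ (Bᵀ * B) *ᵥ d := by
  rw [norm2_eq_dotProduct, dotProduct_mulVec, ← mulVec_transpose, ← mulVec_mulVec,
    dotProduct_comm]

variable [DecidableEq κ]

lemma sigmaMinSq_nonneg (B : Matrix ι κ ℝ) : 0 ≤ sigmaMinSq B :=
  Real.sInf_nonneg <| Set.forall_mem_range.2 <| eigenvalues_conjTranspose_mul_self_nonneg B

lemma sigmaMinSq_le_eigenvalues (B : Matrix ι κ ℝ) (i : κ) :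
    sigmaMinSq B ≤ (isHermitian_transpose_mul_self B).eigenvalues i :=
  csInf_le (Set.finite_range _).bddBelow ⟨i, rfl⟩

lemma sigmaMinSq_mul_norm2_mulVec_le (B : Matrix ι κ ℝ) (d : κ → ℝ) :
    sigmaMinSq B * norm2 (B *ᵥ d) ≤ norm2 ((Bᵀ * B) *ᵥ d) := by
  rw [norm2_mulVec_eq_dotProduct, norm2_eq_dotProduct]
  exact (isHermitian_transpose_mul_self B).mul_dotProduct_mulVec_le (sigmaMinSq_nonneg B)
    (sigmaMinSq_le_eigenvalues B) d

end SingularValues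

section ColumnNorms

variable {m n : ℕ} (A : Matrix (Fin m) (Fin n) ℝ)

lemma col2_nonneg (j : Fin n) : 0 ≤ col2 A j :=
  Finset.sum_nonneg fun i _ => sq_nonneg (A i j)

lemma frob2_eq_sum_col2 : frob2 A = ∑ j, col2 A j :=
  Finset.sum_comm

lemma frob2_subCols (J : Finset (Fin n)) : frob2 (subCols A J) = ∑ j ∈ J, col2 A j := by
  rw [frob2, Finset.sum_comm, ← Finset.sum_coe_sort J]
  rfl

lemma frob2_sub_frob2_subCols (J : Finset (Fin n)) :
    frob2 A - frob2 (subCols A J) = ∑ j ∈ Jᶜ, col2 A j := by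
  rw [frob2_eq_sum_col2, frob2_subCols, ← Finset.sum_add_sum_compl J, add_sub_cancel_left]

lemma frob2_subCols_nonneg (J : Finset (Fin n)) : 0 ≤ frob2 (subCols A J) := by
  rw [frob2_subCols]
  exact Finset.sum_nonneg fun j _ => col2_nonneg A j

end ColumnNorms

section Residual

variable {m n : ℕ} (A : Matrix (Fin m) (Fin n) ℝ) (r : Fin m → ℝ)

lemma transpose_mulVec_apply_eq_zero_of_col2_eq_zero {j : Fin n} (hj : col2 A j = 0) :
    (Aᵀ *ᵥ r) j = 0 := by
  have hcol : ∀ i, A i j = 0 := fun i =>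
    pow_eq_zero_iff two_ne_zero |>.1 <|
      (Finset.sum_eq_zero_iff_of_nonneg fun i _ => sq_nonneg (A i j)).1 hj i (Finset.mem_univ i)
  simp [mulVec, dotProduct, hcol]

lemma sq_transpose_mulVec_le_maxRatio_mul_col2 (j : Fin n) :
    (Aᵀ *ᵥ r) j ^ 2 ≤ maxRatio A r * col2 A j := by
  -- a zero column contributes `0 / 0 = 0` to `maxRatio`, but then its entry of `Aᵀr` vanishes
  rcases (col2_nonneg A j).eq_or_lt' with hj | hj
  · simp [transpose_mulVec_apply_eq_zero_of_col2_eq_zero A r hj, hj]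
  · rw [← div_le_iff₀ hj]
    exact le_ciSup (Set.finite_range fun j => (Aᵀ *ᵥ r) j ^ 2 / col2 A j).bddAbove j

lemma norm2_transpose_mulVec_le_maxRatio_mul {J : Finset (Fin n)}
    (hrJ : (subCols A J)ᵀ *ᵥ r = 0) :
    norm2 (Aᵀ *ᵥ r) ≤ maxRatio A r * (frob2 A - frob2 (subCols A J)) := by
  have hJ : ∀ j ∈ J, (Aᵀ *ᵥ r) j ^ 2 = 0 := fun j hj => by
    have hj : (Aᵀ *ᵥ r) j = 0 := congrFun hrJ ⟨j, hj⟩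
    rw [hj, sq, zero_mul]
  rw [frob2_sub_frob2_subCols, Finset.mul_sum, norm2, ← Finset.sum_add_sum_compl J,
    Finset.sum_eq_zero hJ, zero_add]
  exact Finset.sum_le_sum fun j _ => sq_transpose_mulVec_le_maxRatio_mul_col2 A r j

lemma norm2_mul_eps (hr : Aᵀ *ᵥ r ≠ 0) (θ : ℝ) :
    norm2 (Aᵀ *ᵥ r) * eps A r θ = θ * maxRatio A r + (1 - θ) * (norm2 (Aᵀ *ᵥ r) / frob2 A) := by
  have := (norm2_pos hr).ne'
  rw [eps]
  field_simp

end Residual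

lemma transpose_mulVec_residual {m n : ℕ} (A : Matrix (Fin m) (Fin n) ℝ) {b : Fin m → ℝ}
    {xstar : Fin n → ℝ} (hstar : (Aᵀ * A) *ᵥ xstar = Aᵀ *ᵥ b) (x : Fin n → ℝ) :
    Aᵀ *ᵥ (b - A *ᵥ x) = (Aᵀ * A) *ᵥ (xstar - x) := by
  rw [mulVec_sub, mulVec_sub, hstar, mulVec_mulVec]

theorem stmt12_general {m n : ℕ} (A : Matrix (Fin m) (Fin n) ℝ)
    (b : Fin m → ℝ) (xstar : Fin n → ℝ) (hstar : (Aᵀ * A) *ᵥ xstar = Aᵀ *ᵥ b)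
    (θ : ℝ) (hθ : θ ∈ Set.Icc (0 : ℝ) 1) (x : Fin n → ℝ)
    (r : Fin m → ℝ) (hr : r = b - A *ᵥ x) (hr0 : Aᵀ *ᵥ r ≠ 0)
    (J' : Finset (Fin n))
    (hrJ : (subCols A J')ᵀ *ᵥ r = 0)
    (hpos : 0 < frob2 A - frob2 (subCols A J')) :
    norm2 (Aᵀ *ᵥ r) * eps A r θ ≥
      (θ * frob2 A / (frob2 A - frob2 (subCols A J')) + (1 - θ)) *
        (sigmaMinSq A / frob2 A) * norm2 (A *ᵥ (x - xstar)) := by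
  obtain ⟨hθ0, hθ1⟩ := hθ
  have hspec : sigmaMinSq A * norm2 (A *ᵥ (x - xstar)) ≤ norm2 (Aᵀ *ᵥ r) := by
    rw [← neg_sub, mulVec_neg, norm2_neg, hr, transpose_mulVec_residual A hstar]
    exact sigmaMinSq_mul_norm2_mulVec_le A (xstar - x)
  set G := norm2 (Aᵀ *ᵥ r)
  set F := frob2 A
  set D := F - frob2 (subCols A J')
  have hF : 0 < F := hpos.trans_le (sub_le_self _ (frob2_subCols_nonneg A J'))
  have hgreedy : G / D ≤ maxRatio A r :=
    (div_le_iff₀ hpos).2 (norm2_transpose_mulVec_le_maxRatio_mul A r hrJ)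
  have hcoef : 0 ≤ θ * F / D + (1 - θ) := by
    have := div_nonneg (mul_nonneg hθ0 hF.le) hpos.le
    linarith
  rw [ge_iff_le, norm2_mul_eps A r hr0]
  calc (θ * F / D + (1 - θ)) * (sigmaMinSq A / F) * norm2 (A *ᵥ (x - xstar))
      = (θ * F / D + (1 - θ)) * (sigmaMinSq A * norm2 (A *ᵥ (x - xstar)) / F) := by ring
    _ ≤ (θ * F / D + (1 - θ)) * (G / F) := by gcongr
    _ = θ * (G / D) + (1 - θ) * (G / F) := by field_simp
    _ ≤ θ * maxRatio A r + (1 - θ) * (G / F) := by gcongr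

/-- lower bound on `‖Aᵀr‖₂² ε` when the residual is orthogonal to the
columns in a proper subset `J'`:
`‖Aᵀr‖₂² ε ≥ (θ‖A‖_F²/(‖A‖_F² − ‖A_{J'}‖_F²) + (1−θ)) (σ_min(A)²/‖A‖_F²) ‖x − x⋆‖²_{AᵀA}`. -/
theorem stmt12 {m n : ℕ} (A : Matrix (Fin m) (Fin n) ℝ) (hA : FullColRank A)
    (b : Fin m → ℝ) (xstar : Fin n → ℝ) (hstar : (Aᵀ * A) *ᵥ xstar = Aᵀ *ᵥ b)
    (θ : ℝ) (hθ : θ ∈ Set.Icc (0 : ℝ) 1) (x : Fin n → ℝ)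
    (r : Fin m → ℝ) (hr : r = b - A *ᵥ x) (hr0 : Aᵀ *ᵥ r ≠ 0)
    (J' : Finset (Fin n)) (hJ' : J' ≠ Finset.univ)
    (hrJ : (subCols A J')ᵀ *ᵥ r = 0)
    (hpos : 0 < frob2 A - frob2 (subCols A J')) :
    norm2 (Aᵀ *ᵥ r) * eps A r θ ≥
      (θ * frob2 A / (frob2 A - frob2 (subCols A J')) + (1 - θ)) *
        (sigmaMinSq A / frob2 A) * norm2 (A *ᵥ (x - xstar)) :=
  stmt12_general A b xstar hstar θ hθ x r hr hr0 J' hrJ hpos
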